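/- Let k ≥ 3 and n ∈ ℕ. Suppose (m_0, m_1, …, m_{k-1}) is a position with m_0 = T_n + j for some j with 1 ≤ j ≤ n, m_0 ≤ m_1 ≤ … ≤ m_{k-1}, and L := m_1 + … + m_{k-1} satisfies L ≤ (k-1)·T_n + n + j. Set m := L − (k-1)·m_0. Then 0 ≤ m < n, and subtracting m_0 − T_m from every component yields a position in P_m; that is, (T_m, m_1 − (m_0 − T_m), …, m_{k-1} − (m_0 − T_m)) ∈ P_m. -/

import Mathlib

/-- `T n` is the `n`-th triangular number `n(n+1)/2`. -/
def T (n : ℕ) : ℕ := n * (n + 1) / 2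

/-- `Pset k n` is the set `Pₙ` of positions `(T n, m₁, …, m_{k-1})` (nondecreasing
`k`-tuples) whose first component is `T n` and whose remaining components sum to
`(k-1)·T n + n` (each of them is automatically `≥ T n` by monotonicity). -/
def Pset (k : ℕ) [NeZero k] (n : ℕ) : Set (Fin k → ℕ) :=
  {u | Monotone u ∧ u 0 = T n ∧
    ∑ i ∈ Finset.univ.erase 0, u i = (k - 1) * T n + n}

/-- A raw move of the `k`-heap game (before re-sorting): either (i) remove a positive
number of tokens from at least one and at most `k-1` heaps, or (ii) remove the same
positive number `t` of tokens from all `k` heaps (`t` at most the smallest heap). -/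
def MoveRaw (k : ℕ) (u w : Fin k → ℕ) : Prop :=
  ((∀ i, w i ≤ u i) ∧ u ≠ w ∧
    (Finset.univ.filter fun i => w i < u i).card ≤ k - 1)
  ∨ (∃ t > 0, ∀ i, u i = w i + t)

/-- `v` is a follower of `u`: `v` is obtained from `u` by one move, with
the components re-sorted into nondecreasing order. -/
def Follower (k : ℕ) (u v : Fin k → ℕ) : Prop :=
  ∃ w : Fin k → ℕ, MoveRaw k u w ∧ Monotone v ∧ ∃ σ : Equiv.Perm (Fin k), v = w ∘ σ

/-! Write `L = m₁ + ⋯ + m_{k-1}`. Since every `mᵢ ≥ m₀`, `L = (k-1)·m₀ + m` with `m ≥ 0`,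
and `(k-1)·m₀ = (k-1)·T n + (k-1)·j ≥ (k-1)·T n + 2j` gives `m ≤ n - j < n`. Hence
`T m ≤ T n ≤ m₀`, and lowering all `k` heaps by `m₀ - T m` turns `m₀` into `T m` and `L`
into `L - (k-1)(m₀ - T m) = (k-1)·T m + m`. -/

lemma T_mono : Monotone T := fun _ _ h =>
  Nat.div_le_div_right (Nat.mul_le_mul h (Nat.add_le_add_right h 1))

section Positions

variable {k : ℕ} [NeZero k]

lemma card_univ_erase_zero : (Finset.univ.erase (0 : Fin k)).card = k - 1 := by
  rw [Finset.card_erase_of_mem (Finset.mem_univ _), Finset.card_univ, Fintype.card_fin]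

lemma mul_apply_zero_le_sum_erase_zero {u : Fin k → ℕ} (hu : Monotone u) :
    (k - 1) * u 0 ≤ ∑ i ∈ Finset.univ.erase 0, u i := by
  simpa [card_univ_erase_zero] using
    Finset.card_nsmul_le_sum (Finset.univ.erase 0) u (u 0) fun i _ => hu (Fin.zero_le i)

lemma sum_erase_zero_tsub {u : Fin k → ℕ} (hu : Monotone u) {d : ℕ} (hd : d ≤ u 0) :
    ∑ i ∈ Finset.univ.erase 0, (u i - d) = ∑ i ∈ Finset.univ.erase 0, u i - (k - 1) * d := by
  rw [Finset.sum_tsub_distrib _ fun i _ => hd.trans (hu (Fin.zero_le i)),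
    Finset.sum_const, card_univ_erase_zero, smul_eq_mul]

lemma sub_mem_Pset {u : Fin k → ℕ} (hu : Monotone u) {m : ℕ} (hT : T m ≤ u 0)
    (hL : ∑ i ∈ Finset.univ.erase 0, u i = (k - 1) * u 0 + m) :
    (fun i => u i - (u 0 - T m)) ∈ Pset k m := by
  refine ⟨fun a b hab => Nat.sub_le_sub_right (hu hab) _, Nat.sub_sub_self hT, ?_⟩
  have hshift : (k - 1) * (u 0 - T m) + (k - 1) * T m = (k - 1) * u 0 := by
    rw [← Nat.mul_add, Nat.sub_add_cancel hT]
  rw [sum_erase_zero_tsub hu (Nat.sub_le _ _), hL]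
  omega

end Positions

theorem caseII_diagonal_move_general (k : ℕ) [NeZero k] (hk : 3 ≤ k) (n j : ℕ)
    (hj1 : 1 ≤ j)
    (u : Fin k → ℕ) (hu : Monotone u) (h0 : u 0 = T n + j)
    (hL : ∑ i ∈ Finset.univ.erase 0, u i ≤ (k - 1) * T n + n + j) :
    ∃ m : ℕ, ∑ i ∈ Finset.univ.erase 0, u i = (k - 1) * u 0 + m ∧ m < n ∧
      (fun i => u i - (u 0 - T m)) ∈ Pset k m := by
  obtain ⟨m, hm⟩ := Nat.exists_eq_add_of_le (mul_apply_zero_le_sum_erase_zero hu)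
  have hu0 : (k - 1) * u 0 = (k - 1) * T n + (k - 1) * j := by rw [h0, Nat.mul_add]
  have h2j : 2 * j ≤ (k - 1) * j := Nat.mul_le_mul_right j (by omega)
  have hmn : m < n := by omega
  have hT : T m ≤ u 0 := (T_mono hmn.le).trans (h0 ▸ Nat.le_add_right _ _)
  exact ⟨m, hm, hmn, sub_mem_Pset hu hT hm⟩

/-- Case (ii) of part (II), small-sum case: suppose
`m₀ = T n + j` with `1 ≤ j ≤ n` is the smallest component and
`L = m₁ + ⋯ + m_{k-1} ≤ (k-1)·T n + n + j`.  Then `m := L - (k-1)·m₀` satisfies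
`0 ≤ m < n` and subtracting `m₀ - T m` from every component yields a position
in `Pₘ`. -/
theorem caseII_diagonal_move (k : ℕ) [NeZero k] (hk : 3 ≤ k) (n j : ℕ)
    (hj1 : 1 ≤ j) (hj2 : j ≤ n)
    (u : Fin k → ℕ) (hu : Monotone u) (h0 : u 0 = T n + j)
    (hL : ∑ i ∈ Finset.univ.erase 0, u i ≤ (k - 1) * T n + n + j) :
    ∃ m : ℕ, ∑ i ∈ Finset.univ.erase 0, u i = (k - 1) * u 0 + m ∧ m < n ∧
      (fun i => u i - (u 0 - T m)) ∈ Pset k m :=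
  caseII_diagonal_move_general k hk n j hj1 u hu h0 hL
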